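/- arXiv:2309.09146 — 3 statements merged into one kernel-verified Lean document; each statement's English description precedes it below -/
import Mathlib

section
/- The pessimistic interval Bellman operator G̲ is a γ-contraction with respect to the ℓ∞-norm: for all v, w ∈ ℝ^S, ‖G̲(v) − G̲(w)‖∞ ≤ γ ‖v − w‖∞. -/
/-- The ambiguity set `Δ_{s,a}` of transition probability vectors compatible with the
interval bounds `Plow`, `Pup` at state `s` and action `a`. -/
def ambiguitySet {S A : Type*} [Fintype S] (Plow Pup : S → S → A → ℝ) (s : S) (a : A) :
    Set (S → ℝ) :=
  {p | (∀ s', 0 ≤ p s' ∧ p s' ≤ 1 ∧ Plow s' s a ≤ p s' ∧ p s' ≤ Pup s' s a) ∧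
    ∑ s', p s' = 1}

/-- `min_{p ∈ Δ_{s,a}} ∑_{s' ∈ S} p(s') v(s')`. -/
noncomputable def minExp {S A : Type*} [Fintype S] (Plow Pup : S → S → A → ℝ)
    (s : S) (a : A) (v : S → ℝ) : ℝ :=
  sInf ((fun p : S → ℝ => ∑ s', p s' * v s') '' ambiguitySet Plow Pup s a)

/-- `max_{p ∈ Δ_{s,a}} ∑_{s' ∈ S} p(s') v(s')`. -/
noncomputable def maxExp {S A : Type*} [Fintype S] (Plow Pup : S → S → A → ℝ)
    (s : S) (a : A) (v : S → ℝ) : ℝ :=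
  sSup ((fun p : S → ℝ => ∑ s', p s' * v s') '' ambiguitySet Plow Pup s a)

/-- The pessimistic Bellman-policy operator
`F̲(v,π)(s) = R̲(s,π(s)) + γ · min_{p ∈ Δ_{s,π(s)}} ∑_{s'} p(s') v(s')`. -/
noncomputable def Fpess {S A : Type*} [Fintype S] (Plow Pup : S → S → A → ℝ)
    (Rlow : S → A → ℝ) (γ : ℝ) (v : S → ℝ) (π : S → A) (s : S) : ℝ :=
  Rlow s (π s) + γ * minExp Plow Pup s (π s) v

/-- The optimistic Bellman-policy operator
`F̄(v,π)(s) = R̄(s,π(s)) + γ · max_{p ∈ Δ_{s,π(s)}} ∑_{s'} p(s') v(s')`. -/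
noncomputable def Fopt {S A : Type*} [Fintype S] (Plow Pup : S → S → A → ℝ)
    (Rup : S → A → ℝ) (γ : ℝ) (v : S → ℝ) (π : S → A) (s : S) : ℝ :=
  Rup s (π s) + γ * maxExp Plow Pup s (π s) v

/-- The pessimistic interval Bellman operator
`G̲(v)(s) = sup_{a ∈ A} [ R̲(s,a) + γ · min_{p ∈ Δ_{s,a}} ∑_{s'} p(s') v(s') ]`. -/
noncomputable def Gpess {S A : Type*} [Fintype S] (Plow Pup : S → S → A → ℝ)
    (Rlow : S → A → ℝ) (γ : ℝ) (v : S → ℝ) (s : S) : ℝ :=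
  ⨆ a : A, (Rlow s a + γ * minExp Plow Pup s a v)

/-- The optimistic interval Bellman operator
`Ḡ(v)(s) = sup_{a ∈ A} [ R̄(s,a) + γ · max_{p ∈ Δ_{s,a}} ∑_{s'} p(s') v(s') ]`. -/
noncomputable def Gopt {S A : Type*} [Fintype S] (Plow Pup : S → S → A → ℝ)
    (Rup : S → A → ℝ) (γ : ℝ) (v : S → ℝ) (s : S) : ℝ :=
  ⨆ a : A, (Rup s a + γ * maxExp Plow Pup s a v)

/- For a probability vector `p`, `v ↦ ∑ p(s') v(s')` is 1-Lipschitz for the sup norm. Infima,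
then `R̲(s,a) + γ · _`, then suprema over `a` of such functions are `γ`-Lipschitz, provided the
infima are over nonempty sets: the interval constraints leave `Δ_{s,a}` nonempty by the
intermediate value theorem along the segment from `P̲(·,s,a)` to `P̄(·,s,a)`. -/

theorem exists_mem_Icc_sum_eq {ι : Type*} [Fintype ι] {l u : ι → ℝ} {c : ℝ} (hlu : l ≤ u)
    (hl : ∑ i, l i ≤ c) (hu : c ≤ ∑ i, u i) :
    ∃ p ∈ Set.Icc l u, ∑ i, p i = c := by
  let seg : ℝ → ι → ℝ := fun t i => l i + t * (u i - l i)
  have hcont : ContinuousOn (fun t => ∑ i, seg t i) (Set.Icc 0 1) := by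
    simp only [seg]
    fun_prop
  obtain ⟨t, ⟨ht0, ht1⟩, hsum⟩ :=
    intermediate_value_Icc zero_le_one hcont ⟨by simpa [seg] using hl, by simpa [seg] using hu⟩
  refine ⟨seg t, ⟨fun i => ?_, fun i => ?_⟩, hsum⟩
  · have : 0 ≤ t * (u i - l i) := mul_nonneg ht0 (sub_nonneg.2 (hlu i))
    simp only [seg]
    linarith
  · have : t * (u i - l i) ≤ u i - l i := mul_le_of_le_one_left (sub_nonneg.2 (hlu i)) ht1
    simp only [seg]
    linarith

theorem sum_mul_le_sum_mul_add_norm_sub {ι : Type*} [Fintype ι] {p : ι → ℝ}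
    (hp0 : ∀ i, 0 ≤ p i) (hp1 : ∑ i, p i = 1) (v w : ι → ℝ) :
    ∑ i, p i * v i ≤ ∑ i, p i * w i + ‖v - w‖ := by
  have hdiff : ∑ i, p i * (v i - w i) ≤ ∑ i, p i * ‖v - w‖ :=
    Finset.sum_le_sum fun i _ => mul_le_mul_of_nonneg_left
      ((le_abs_self _).trans (norm_le_pi_norm (v - w) i)) (hp0 i)
  rw [← Finset.sum_mul, hp1, one_mul] at hdiff
  simp only [mul_sub, Finset.sum_sub_distrib] at hdiff
  linarith

section IntervalMDP

variable {S A : Type*} [Fintype S] {Plow Pup : S → S → A → ℝ} {s : S} {a : A}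

theorem ambiguitySet_nonempty (hP01 : ∀ s' s a, 0 ≤ Plow s' s a ∧ Pup s' s a ≤ 1)
    (hPle : ∀ s' s a, Plow s' s a ≤ Pup s' s a)
    (hPsum : ∀ s a, (∑ s', Plow s' s a) ≤ 1 ∧ 1 ≤ ∑ s', Pup s' s a) (s : S) (a : A) :
    (ambiguitySet Plow Pup s a).Nonempty := by
  obtain ⟨p, ⟨hlp, hpu⟩, hsum⟩ :=
    exists_mem_Icc_sum_eq (fun s' => hPle s' s a) (hPsum s a).1 (hPsum s a).2
  exact ⟨p, fun s' => ⟨(hP01 s' s a).1.trans (hlp s'), (hpu s').trans (hP01 s' s a).2,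
    hlp s', hpu s'⟩, hsum⟩

theorem sum_mul_le_sum_mul_add_norm_sub_of_mem_ambiguitySet {p : S → ℝ}
    (hp : p ∈ ambiguitySet Plow Pup s a) (v w : S → ℝ) :
    ∑ s', p s' * v s' ≤ ∑ s', p s' * w s' + ‖v - w‖ :=
  sum_mul_le_sum_mul_add_norm_sub (fun s' => (hp.1 s').1) hp.2 v w

theorem bddBelow_expectations (v : S → ℝ) :
    BddBelow ((fun p : S → ℝ => ∑ s', p s' * v s') '' ambiguitySet Plow Pup s a) := by
  refine ⟨-‖v‖, ?_⟩
  rintro _ ⟨p, hp, rfl⟩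
  have := sum_mul_le_sum_mul_add_norm_sub_of_mem_ambiguitySet hp 0 v
  simp only [Pi.zero_apply, mul_zero, Finset.sum_const_zero, zero_sub, norm_neg] at this
  linarith

theorem minExp_le_sum_mul {p : S → ℝ} (hp : p ∈ ambiguitySet Plow Pup s a) (v : S → ℝ) :
    minExp Plow Pup s a v ≤ ∑ s', p s' * v s' :=
  csInf_le (bddBelow_expectations v) ⟨p, hp, rfl⟩

theorem minExp_le_norm (hne : (ambiguitySet Plow Pup s a).Nonempty) (v : S → ℝ) :
    minExp Plow Pup s a v ≤ ‖v‖ := by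
  obtain ⟨p, hp⟩ := hne
  calc minExp Plow Pup s a v ≤ ∑ s', p s' * v s' := minExp_le_sum_mul hp v
    _ ≤ ‖v‖ := by simpa using sum_mul_le_sum_mul_add_norm_sub_of_mem_ambiguitySet hp v 0

theorem minExp_le_add_norm_sub (hne : (ambiguitySet Plow Pup s a).Nonempty) (v w : S → ℝ) :
    minExp Plow Pup s a v ≤ minExp Plow Pup s a w + ‖v - w‖ := by
  suffices minExp Plow Pup s a v - ‖v - w‖ ≤ minExp Plow Pup s a w by linarith
  refine le_csInf (hne.image _) ?_
  rintro _ ⟨p, hp, rfl⟩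
  linarith [minExp_le_sum_mul hp v, sum_mul_le_sum_mul_add_norm_sub_of_mem_ambiguitySet hp v w]

variable {Rlow : S → A → ℝ} {γ : ℝ}

theorem bddAbove_range_bellman (hγ : 0 ≤ γ) (hne : ∀ a, (ambiguitySet Plow Pup s a).Nonempty)
    (hR : BddAbove (Set.range fun a => Rlow s a)) (v : S → ℝ) :
    BddAbove (Set.range fun a => Rlow s a + γ * minExp Plow Pup s a v) := by
  obtain ⟨M, hM⟩ := hR
  refine ⟨M + γ * ‖v‖, ?_⟩
  rintro _ ⟨a, rfl⟩
  exact add_le_add (hM ⟨a, rfl⟩) (mul_le_mul_of_nonneg_left (minExp_le_norm (hne a) v) hγ)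

theorem Gpess_le_add_norm_sub [Nonempty A] (hγ : 0 ≤ γ)
    (hne : ∀ a, (ambiguitySet Plow Pup s a).Nonempty)
    (hR : BddAbove (Set.range fun a => Rlow s a)) (v w : S → ℝ) :
    Gpess Plow Pup Rlow γ v s ≤ Gpess Plow Pup Rlow γ w s + γ * ‖v - w‖ := by
  refine ciSup_le fun a => ?_
  calc Rlow s a + γ * minExp Plow Pup s a v
      ≤ Rlow s a + γ * minExp Plow Pup s a w + γ * ‖v - w‖ := by
        linarith [mul_le_mul_of_nonneg_left (minExp_le_add_norm_sub (hne a) v w) hγ]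
    _ ≤ Gpess Plow Pup Rlow γ w s + γ * ‖v - w‖ := by
        gcongr
        exact le_ciSup (bddAbove_range_bellman hγ hne hR w) a

end IntervalMDP

theorem Gpess_contraction_general {S A : Type*} [Fintype S] [Nonempty A]
    (γ : ℝ) (hγ0 : 0 < γ)
    (Plow Pup : S → S → A → ℝ)
    (hP01 : ∀ s' s a, 0 ≤ Plow s' s a ∧ Pup s' s a ≤ 1)
    (hPle : ∀ s' s a, Plow s' s a ≤ Pup s' s a)
    (hPsum : ∀ s a, (∑ s', Plow s' s a) ≤ 1 ∧ 1 ≤ ∑ s', Pup s' s a)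
    (Rlow : S → A → ℝ) (hRbdd : ∀ s, BddAbove (Set.range fun a => Rlow s a))
    (v w : S → ℝ) :
    ‖Gpess Plow Pup Rlow γ v - Gpess Plow Pup Rlow γ w‖ ≤ γ * ‖v - w‖ := by
  have hne := ambiguitySet_nonempty hP01 hPle hPsum
  have hle (x y : S → ℝ) (s : S) := Gpess_le_add_norm_sub hγ0.le (hne s) (hRbdd s) x y
  refine (pi_norm_le_iff_of_nonneg (by positivity)).2 fun s => ?_
  rw [Pi.sub_apply, Real.norm_eq_abs, abs_sub_le_iff]
  constructor
  · linarith [hle v w s]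
  · rw [norm_sub_rev v w]
    linarith [hle w v s]

/-- the pessimistic interval Bellman operator is a γ-contraction with
respect to the ℓ∞-norm. -/
theorem Gpess_contraction {S A : Type*} [Fintype S] [Nonempty S] [Nonempty A]
    (γ : ℝ) (hγ0 : 0 < γ) (hγ1 : γ < 1)
    (Plow Pup : S → S → A → ℝ)
    (hP01 : ∀ s' s a, 0 ≤ Plow s' s a ∧ Pup s' s a ≤ 1)
    (hPle : ∀ s' s a, Plow s' s a ≤ Pup s' s a)
    (hPsum : ∀ s a, (∑ s', Plow s' s a) ≤ 1 ∧ 1 ≤ ∑ s', Pup s' s a)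
    (Rlow : S → A → ℝ) (hRbdd : ∀ s, BddAbove (Set.range fun a => Rlow s a))
    (v w : S → ℝ) :
    ‖Gpess Plow Pup Rlow γ v - Gpess Plow Pup Rlow γ w‖ ≤ γ * ‖v - w‖ :=
  Gpess_contraction_general γ hγ0 Plow Pup hP01 hPle hPsum Rlow hRbdd v w
end

section
/- Fix (s,a) ∈ S × A and v : S → ℝ, and let n = |S|. Let σ : {1,…,n} → S be a bijection such that v(σ(1)) ≥ v(σ(2)) ≥ … ≥ v(σ(n)), and let j ∈ {1,…,n} satisfy P̲(σ(j),s,a) ≤ 1 − ∑_{i<j} P̲(σ(i),s,a) − ∑_{i>j} P̄(σ(i),s,a) ≤ P̄(σ(j),s,a). Define p* : S → ℝ by p*(σ(i)) = P̲(σ(i),s,a) for i < j, p*(σ(j)) = 1 − ∑_{i<j} P̲(σ(i),s,a) − ∑_{i>j} P̄(σ(i),s,a), and p*(σ(i)) = P̄(σ(i),s,a) for i > j. Then p* ∈ Δ_{s,a}, and for every p ∈ Δ_{s,a}, ∑_{s'∈S} p*(s') v(s') ≤ ∑_{s'∈S} p(s') v(s'); in particular min_{p ∈ Δ_{s,a}}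 ∑_{s'∈S} p(s') v(s') = ∑_{s'∈S} p*(s') v(s'). -/
/-! The pivot vector `p*` puts as little mass as allowed on the states with large values and as
much as allowed on those with small values. Any other `p` in `Δ_{s,a}` has the same total mass,
so `d = p - p*` sums to zero, is nonnegative before the pivot `j` and nonpositive after it; since
`v ∘ σ` is antitone, `d i * v(σ i) ≥ d i * v(σ j)` for every `i`, and summing gives
`∑ d · v ≥ (∑ d) · v(σ j) = 0`. -/

open Finset

theorem Finset.sum_mul_nonneg_of_sum_eq_zero {ι : Type*} (s : Finset ι) {d w : ι → ℝ}
    (c : ℝ) (hd : ∑ i ∈ s, d i = 0) (h : ∀ i ∈ s, d i * c ≤ d i * w i) :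
    0 ≤ ∑ i ∈ s, d i * w i :=
  calc (0 : ℝ) = (∑ i ∈ s, d i) * c := by rw [hd, zero_mul]
    _ = ∑ i ∈ s, d i * c := sum_mul _ _ _
    _ ≤ ∑ i ∈ s, d i * w i := sum_le_sum h

theorem Finset.sum_mul_le_sum_mul_of_antitone {ι : Type*} [LinearOrder ι] (s : Finset ι)
    {p q w : ι → ℝ} (j : ι) (hw : Antitone w) (hlt : ∀ i < j, q i ≤ p i)
    (hgt : ∀ i, j < i → p i ≤ q i) (hsum : ∑ i ∈ s, p i = ∑ i ∈ s, q i) :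
    ∑ i ∈ s, q i * w i ≤ ∑ i ∈ s, p i * w i := by
  have hd : ∑ i ∈ s, (p i - q i) = 0 := by rw [sum_sub_distrib, hsum, sub_self]
  have key : ∀ i ∈ s, (p i - q i) * w j ≤ (p i - q i) * w i := by
    intro i _
    rcases lt_trichotomy i j with h | rfl | h
    · exact mul_le_mul_of_nonneg_left (hw h.le) (sub_nonneg.2 (hlt i h))
    · rfl
    · exact mul_le_mul_of_nonpos_left (hw h.le) (sub_nonpos.2 (hgt i h))
  simpa only [sub_mul, sum_sub_distrib, sub_nonneg] using
    s.sum_mul_nonneg_of_sum_eq_zero (w j) hd key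

section PivotVector

variable {ι : Type*} [LinearOrder ι]

def pivotVector (lo hi : ι → ℝ) (j : ι) (x : ℝ) (i : ι) : ℝ :=
  if i < j then lo i else if i = j then x else hi i

variable {lo hi : ι → ℝ} {j : ι} {x : ℝ}

theorem pivotVector_of_lt {i : ι} (h : i < j) : pivotVector lo hi j x i = lo i := if_pos h

theorem pivotVector_of_gt {i : ι} (h : j < i) : pivotVector lo hi j x i = hi i := by
  rw [pivotVector, if_neg (not_lt.2 h.le), if_neg h.ne']

theorem pivotVector_mem_Icc (hle : ∀ i, lo i ≤ hi i) (hx : x ∈ Set.Icc (lo j) (hi j))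
    (i : ι) : pivotVector lo hi j x i ∈ Set.Icc (lo i) (hi i) := by
  rcases lt_trichotomy i j with h | rfl | h
  · rw [pivotVector_of_lt h]; exact ⟨le_rfl, hle i⟩
  · rwa [pivotVector, if_neg (lt_irrefl i), if_pos rfl]
  · rw [pivotVector_of_gt h]; exact ⟨hle i, le_rfl⟩

theorem sum_pivotVector [Fintype ι] :
    ∑ i, pivotVector lo hi j x i =
      ∑ i ∈ univ.filter (· < j), lo i + x + ∑ i ∈ univ.filter (j < ·), hi i := by
  classical
  have split : ∀ i, pivotVector lo hi j x i =
      (if i < j then lo i else 0) + (if j = i then x else 0) + (if j < i then hi i else 0) := by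
    intro i
    rcases lt_trichotomy i j with h | rfl | h
    · simp [pivotVector, h, h.ne', not_lt.2 h.le]
    · simp [pivotVector]
    · simp [pivotVector, h, h.ne, h.ne', not_lt.2 h.le]
  simp only [split, sum_add_distrib, sum_filter, sum_ite_eq, mem_univ, if_true]

end PivotVector

theorem mem_ambiguitySet_of_bounds {S A : Type*} [Fintype S] {Plow Pup : S → S → A → ℝ}
    {s : S} {a : A} (hP01 : ∀ s', 0 ≤ Plow s' s a ∧ Pup s' s a ≤ 1) {p : S → ℝ}
    (hp : ∀ s', p s' ∈ Set.Icc (Plow s' s a) (Pup s' s a)) (hsum : ∑ s', p s' = 1) :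
    p ∈ ambiguitySet Plow Pup s a :=
  ⟨fun s' => ⟨(hP01 s').1.trans (hp s').1, (hp s').2.trans (hP01 s').2, hp s'⟩, hsum⟩

theorem minExp_closed_form_general {S A : Type*} [Fintype S]
    (Plow Pup : S → S → A → ℝ)
    (hP01 : ∀ s' s a, 0 ≤ Plow s' s a ∧ Pup s' s a ≤ 1)
    (hPle : ∀ s' s a, Plow s' s a ≤ Pup s' s a)
    (s : S) (a : A) (v : S → ℝ)
    (σ : Fin (Fintype.card S) ≃ S) (hσ : Antitone fun i => v (σ i))
    (j : Fin (Fintype.card S)) (ξ : ℝ)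
    (hξ : ξ = 1 - (∑ i ∈ Finset.univ.filter (fun i => i < j), Plow (σ i) s a)
      - ∑ i ∈ Finset.univ.filter (fun i => j < i), Pup (σ i) s a)
    (hj : Plow (σ j) s a ≤ ξ ∧ ξ ≤ Pup (σ j) s a)
    (pstar : S → ℝ)
    (hpstar : ∀ i : Fin (Fintype.card S),
      pstar (σ i) = if i < j then Plow (σ i) s a
        else if i = j then ξ else Pup (σ i) s a) :
    pstar ∈ ambiguitySet Plow Pup s a ∧
    (∀ p ∈ ambiguitySet Plow Pup s a,
      (∑ s', pstar s' * v s') ≤ ∑ s', p s' * v s') ∧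
    minExp Plow Pup s a v = ∑ s', pstar s' * v s' := by
  have hq : ∀ i, pstar (σ i) =
      pivotVector (fun i => Plow (σ i) s a) (fun i => Pup (σ i) s a) j ξ i := hpstar
  have hbounds : ∀ s', pstar s' ∈ Set.Icc (Plow s' s a) (Pup s' s a) := σ.forall_congr_right.1
    fun i => hq i ▸ pivotVector_mem_Icc (fun i => hPle _ _ _) hj i
  have hsum : ∑ s', pstar s' = 1 := by
    rw [← σ.sum_comp, Fintype.sum_congr _ _ hq, sum_pivotVector, hξ]
    ring
  have hmem := mem_ambiguitySet_of_bounds (fun s' => hP01 s' s a) hbounds hsum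
  have hmin : ∀ p ∈ ambiguitySet Plow Pup s a,
      ∑ s', pstar s' * v s' ≤ ∑ s', p s' * v s' := by
    rintro p ⟨hp, hpsum⟩
    simp only [← σ.sum_comp (fun s' => _ * v s')]
    refine univ.sum_mul_le_sum_mul_of_antitone j hσ (fun i h => ?_) (fun i h => ?_) ?_
    · rw [hq, pivotVector_of_lt h]; exact (hp _).2.2.1
    · rw [hq, pivotVector_of_gt h]; exact (hp _).2.2.2
    · rw [σ.sum_comp, σ.sum_comp, hpsum, hsum]
  exact ⟨hmem, hmin,
    IsLeast.csInf_eq ⟨⟨pstar, hmem, rfl⟩, fun _ ⟨p, hp, hx⟩ => hx ▸ hmin p hp⟩⟩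

/-- closed-form minimizer of the expected value over the ambiguity set:
the vector `pstar` that assigns the lower bound to the states with the largest values
of `v`, the upper bound to the states with the smallest values, and the residual mass
to the pivot state, attains the minimum of `∑ p(s') v(s')` over `Δ_{s,a}`. -/
theorem minExp_closed_form {S A : Type*} [Fintype S] [Nonempty S] [Nonempty A]
    (Plow Pup : S → S → A → ℝ)
    (hP01 : ∀ s' s a, 0 ≤ Plow s' s a ∧ Pup s' s a ≤ 1)
    (hPle : ∀ s' s a, Plow s' s a ≤ Pup s' s a)
    (hPsum : ∀ s a, (∑ s', Plow s' s a) ≤ 1 ∧ 1 ≤ ∑ s', Pup s' s a)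
    (s : S) (a : A) (v : S → ℝ)
    (σ : Fin (Fintype.card S) ≃ S) (hσ : Antitone fun i => v (σ i))
    (j : Fin (Fintype.card S)) (ξ : ℝ)
    (hξ : ξ = 1 - (∑ i ∈ Finset.univ.filter (fun i => i < j), Plow (σ i) s a)
      - ∑ i ∈ Finset.univ.filter (fun i => j < i), Pup (σ i) s a)
    (hj : Plow (σ j) s a ≤ ξ ∧ ξ ≤ Pup (σ j) s a)
    (pstar : S → ℝ)
    (hpstar : ∀ i : Fin (Fintype.card S),
      pstar (σ i) = if i < j then Plow (σ i) s a
        else if i = j then ξ else Pup (σ i) s a) :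
    pstar ∈ ambiguitySet Plow Pup s a ∧
    (∀ p ∈ ambiguitySet Plow Pup s a,
      (∑ s', pstar s' * v s') ≤ ∑ s', p s' * v s') ∧
    minExp Plow Pup s a v = ∑ s', pstar s' * v s' :=
  minExp_closed_form_general Plow Pup hP01 hPle s a v σ hσ j ξ hξ hj pstar hpstar
end

section
/- Suppose A ⊆ A^cv and, for all s',s ∈ S and all a ∈ A: P̲(s',s,a) ≤ P̲^cv(s',s,a), P̄^cv(s',s,a) ≤ P̄(s',s,a), and R̲(s,a) ≤ R̲^cv(s,a). Then for every v ∈ ℝ^S, G̲(v)(s) ≤ G̲^cv(v)(s) for all s ∈ S, where G̲(v)(s) = sup_{a∈A} [ R̲(s,a) + γ · min_{p ∈ Δ_{s,a}} ∑_{s'∈S} p(s') v(s') ] and G̲^cv(v)(s) = sup_{a∈A^cv} [ R̲^cv(s,a) + γ · min_{p ∈ Δ^cv_{s,a}} ∑_{s'∈S} p(s') v(s') ]. -/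
/-- The pessimistic interval Bellman operator with the supremum restricted to a set of
actions `Aset`: `G̲(v)(s) = sup_{a ∈ Aset} [ R̲(s,a) + γ · min_{p ∈ Δ_{s,a}} ∑ p(s')v(s') ]`. -/
noncomputable def GpessOn {S A : Type*} [Fintype S] (Aset : Set A)
    (Plow Pup : S → S → A → ℝ) (Rlow : S → A → ℝ) (γ : ℝ) (v : S → ℝ) (s : S) : ℝ :=
  sSup ((fun a => Rlow s a + γ * minExp Plow Pup s a v) '' Aset)

lemma amb_nonempty {S A : Type*} [Fintype S] (Plow Pup : S → S → A → ℝ) (s : S) (a : A)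
    (h01 : ∀ s', 0 ≤ Plow s' s a ∧ Pup s' s a ≤ 1)
    (hle : ∀ s', Plow s' s a ≤ Pup s' s a)
    (hsum : (∑ s', Plow s' s a) ≤ 1 ∧ 1 ≤ ∑ s', Pup s' s a) :
    (ambiguitySet Plow Pup s a).Nonempty := by
  set L := ∑ s', Plow s' s a
  set U := ∑ s', Pup s' s a
  have hLU : L ≤ U := Finset.sum_le_sum fun s' _ => hle s'
  rcases eq_or_lt_of_le hLU with hEq | hlt
  · refine ⟨fun s' => Plow s' s a, ⟨fun s' => ?_, ?_⟩⟩
    · exact ⟨(h01 s').1, le_trans (hle s') (h01 s').2, le_refl _, hle s'⟩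
    · -- L = U forces L = 1
      have : L = 1 := le_antisymm hsum.1 (hEq ▸ hsum.2)
      exact this
  · set t := (1 - L) / (U - L) with ht
    have hUL : 0 < U - L := sub_pos.mpr hlt
    have ht0 : 0 ≤ t := div_nonneg (by linarith [hsum.1]) hUL.le
    have ht1 : t ≤ 1 := by
      rw [ht, div_le_one hUL]; linarith [hsum.2]
    refine ⟨fun s' => Plow s' s a + t * (Pup s' s a - Plow s' s a), ⟨fun s' => ?_, ?_⟩⟩
    · dsimp only
      have hd : 0 ≤ Pup s' s a - Plow s' s a := sub_nonneg.mpr (hle s')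
      have h1 : t * (Pup s' s a - Plow s' s a) ≤ Pup s' s a - Plow s' s a := by
        nlinarith
      constructor
      · have := mul_nonneg ht0 hd; linarith [(h01 s').1]
      constructor
      · have := (h01 s').2; linarith
      constructor
      · nlinarith
      · linarith
    · have : ∑ s', (Plow s' s a + t * (Pup s' s a - Plow s' s a))
          = L + t * (U - L) := by
        rw [Finset.sum_add_distrib, ← Finset.mul_sum, Finset.sum_sub_distrib]
      rw [this, ht, div_mul_cancel₀ _ hUL.ne']
      ring

lemma amb_sum_bounds {S A : Type*} [Fintype S] (Plow Pup : S → S → A → ℝ) (s : S) (a : A)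
    (v : S → ℝ) {p : S → ℝ} (hp : p ∈ ambiguitySet Plow Pup s a) :
    (∑ s', -|v s'|) ≤ (∑ s', p s' * v s') ∧ (∑ s', p s' * v s') ≤ ∑ s', |v s'| := by
  constructor
  · refine Finset.sum_le_sum fun s' _ => ?_
    have h0 := (hp.1 s').1; have h1 := (hp.1 s').2.1
    have := abs_nonneg (v s')
    nlinarith [neg_abs_le (v s'), le_abs_self (v s')]
  · refine Finset.sum_le_sum fun s' _ => ?_
    have h0 := (hp.1 s').1; have h1 := (hp.1 s').2.1
    nlinarith [neg_abs_le (v s'), le_abs_self (v s')]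

lemma amb_image_bddBelow {S A : Type*} [Fintype S] (Plow Pup : S → S → A → ℝ) (s : S) (a : A)
    (v : S → ℝ) :
    BddBelow ((fun p : S → ℝ => ∑ s', p s' * v s') '' ambiguitySet Plow Pup s a) := by
  refine ⟨∑ s', -|v s'|, ?_⟩
  rintro x ⟨p, hp, rfl⟩
  exact (amb_sum_bounds Plow Pup s a v hp).1

/-- the pessimistic interval Bellman operator of an action-space pessimistic
relaxation dominates the pessimistic interval Bellman operator of the original IMDP. -/
theorem Gpess_le_Gpess_relaxation {S A : Type*} [Fintype S] [Nonempty S]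
    (Aset Acv : Set A) (hAne : Aset.Nonempty) (hAcvne : Acv.Nonempty)
    (hsub : Aset ⊆ Acv)
    (γ : ℝ) (hγ0 : 0 < γ) (hγ1 : γ < 1)
    (Plow Pup : S → S → A → ℝ)
    (hP01 : ∀ s' s, ∀ a ∈ Aset, 0 ≤ Plow s' s a ∧ Pup s' s a ≤ 1)
    (hPle : ∀ s' s, ∀ a ∈ Aset, Plow s' s a ≤ Pup s' s a)
    (hPsum : ∀ s, ∀ a ∈ Aset, (∑ s', Plow s' s a) ≤ 1 ∧ 1 ≤ ∑ s', Pup s' s a)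
    (PlowCv PupCv : S → S → A → ℝ)
    (hP01cv : ∀ s' s, ∀ a ∈ Acv, 0 ≤ PlowCv s' s a ∧ PupCv s' s a ≤ 1)
    (hPleCv : ∀ s' s, ∀ a ∈ Acv, PlowCv s' s a ≤ PupCv s' s a)
    (hPsumCv : ∀ s, ∀ a ∈ Acv, (∑ s', PlowCv s' s a) ≤ 1 ∧ 1 ≤ ∑ s', PupCv s' s a)
    (Rlow RlowCv : S → A → ℝ)
    (hRbdd : ∀ s, BddAbove ((fun a => Rlow s a) '' Aset))
    (hRcvBdd : ∀ s, BddAbove ((fun a => RlowCv s a) '' Acv))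
    (hPlowRel : ∀ s' s, ∀ a ∈ Aset, Plow s' s a ≤ PlowCv s' s a)
    (hPupRel : ∀ s' s, ∀ a ∈ Aset, PupCv s' s a ≤ Pup s' s a)
    (hRRel : ∀ s, ∀ a ∈ Aset, Rlow s a ≤ RlowCv s a)
    (v : S → ℝ) :
    ∀ s, GpessOn Aset Plow Pup Rlow γ v s ≤ GpessOn Acv PlowCv PupCv RlowCv γ v s := by
  intro s
  -- nonemptiness of cv ambiguity sets
  have hcvNe : ∀ a ∈ Acv, (ambiguitySet PlowCv PupCv s a).Nonempty := fun a ha =>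
    amb_nonempty _ _ s a (fun s' => hP01cv s' s a ha) (fun s' => hPleCv s' s a ha)
      (hPsumCv s a ha)
  -- target set is bounded above
  obtain ⟨M, hM⟩ := hRcvBdd s
  have hBdd : BddAbove ((fun a => RlowCv s a + γ * minExp PlowCv PupCv s a v) '' Acv) := by
    refine ⟨M + γ * ∑ s', |v s'|, ?_⟩
    rintro x ⟨a, ha, rfl⟩
    have hR : RlowCv s a ≤ M := hM ⟨a, ha, rfl⟩
    obtain ⟨p, hp⟩ := hcvNe a ha
    have hmin : minExp PlowCv PupCv s a v ≤ ∑ s', |v s'| := by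
      have h1 : minExp PlowCv PupCv s a v ≤ ∑ s', p s' * v s' :=
        csInf_le (amb_image_bddBelow _ _ _ _ _) ⟨p, hp, rfl⟩
      exact h1.trans (amb_sum_bounds _ _ s a v hp).2
    have := mul_le_mul_of_nonneg_left hmin hγ0.le
    dsimp only
    linarith
  refine csSup_le ((hAne.image _)) ?_
  rintro x ⟨a, ha, rfl⟩
  have haCv : a ∈ Acv := hsub ha
  -- minExp comparison via subset of ambiguity sets
  have hsubΔ : ambiguitySet PlowCv PupCv s a ⊆ ambiguitySet Plow Pup s a := by
    rintro p ⟨hpb, hps⟩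
    refine ⟨fun s' => ?_, hps⟩
    obtain ⟨h0, h1, hl, hu⟩ := hpb s'
    exact ⟨h0, h1, (hPlowRel s' s a ha).trans hl, hu.trans (hPupRel s' s a ha)⟩
  have hminle : minExp Plow Pup s a v ≤ minExp PlowCv PupCv s a v :=
    csInf_le_csInf (amb_image_bddBelow _ _ _ _ _) ((hcvNe a haCv).image _)
      (Set.image_mono hsubΔ)
  have hfg : Rlow s a + γ * minExp Plow Pup s a v
      ≤ RlowCv s a + γ * minExp PlowCv PupCv s a v := by
    have := mul_le_mul_of_nonneg_left hminle hγ0.le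
    linarith [hRRel s a ha]
  exact hfg.trans (le_csSup hBdd ⟨a, haCv, rfl⟩)
end
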